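/- arXiv:2311.11067 — 2 statements merged into one kernel-verified Lean document; each statement's English description precedes it below -/
import Mathlib

section
/- Let Σ = {α⁽⁰⁾, β⁽⁰⁾, ψ⁽²⁾} and Δ = {a⁽⁰⁾, f⁽³⁾}, and let h be the tree homomorphism induced by h(α) = h(β) = a and h(ψ) = f(x₂, x₁, x₁). Then h is not injective but h is tetris-free. -/
inductive RTree (α : Type) : Type where
  | node : α → List (RTree α) → RTree α

namespace RTree

variable {α : Type}

def size : RTree α → ℕ
  | node _ ts => 1 + (ts.attach.map (fun t => size t.1)).sum
decreasing_by
  simp only [RTree.node.sizeOf_spec]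
  have := List.sizeOf_lt_of_mem t.2
  omega


def height : RTree α → ℕ
  | node _ ts => (ts.attach.map (fun t => height t.1 + 1)).foldr max 0
decreasing_by
  simp only [RTree.node.sizeOf_spec]
  have := List.sizeOf_lt_of_mem t.2
  omega


inductive IsPos : RTree α → List ℕ → Prop
  | nil (t : RTree α) : IsPos t []
  | cons {a : α} {ts : List (RTree α)} {i : ℕ} {p : List ℕ} (h : i < ts.length) :
      IsPos ts[i] p → IsPos (node a ts) (i :: p)

inductive SubtreeAt : RTree α → List ℕ → RTree α → Prop
  | nil (t : RTree α) : SubtreeAt t [] t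
  | cons {a : α} {ts : List (RTree α)} {i : ℕ} {p : List ℕ} {u : RTree α} (h : i < ts.length) :
      SubtreeAt ts[i] p u → SubtreeAt (node a ts) (i :: p) u

inductive WellRanked (rk : α → ℕ) : RTree α → Prop
  | node {a : α} {ts : List (RTree α)} : ts.length = rk a →
      (∀ t ∈ ts, WellRanked rk t) → WellRanked rk (node a ts)

end RTree

instance {α : Type} [Inhabited α] : Inhabited (RTree α) := ⟨.node default []⟩

def substVars {δ : Type} (f : ℕ → RTree δ) : RTree (Sum δ ℕ) → RTree δ
  | .node (.inl d) ts => .node d (ts.attach.map (fun t => substVars f t.1))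
  | .node (.inr i) _ => f i
decreasing_by
  simp only [RTree.node.sizeOf_spec]
  have := List.sizeOf_lt_of_mem t.2
  omega


def applyHom {σ δ : Type} [Inhabited δ] (h' : σ → RTree (Sum δ ℕ)) : RTree σ → RTree δ
  | .node a ts =>
      substVars (fun i => (ts.attach.map (fun t => applyHom h' t.1)).getD i default) (h' a)
decreasing_by
  simp only [RTree.node.sizeOf_spec]
  have := List.sizeOf_lt_of_mem t.2
  omega


def HasVar {δ : Type} (u : RTree (Sum δ ℕ)) (i : ℕ) : Prop :=
  ∃ p l, RTree.SubtreeAt u p (.node (.inr i) l)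

def Nondeleting {σ δ : Type} (rk : σ → ℕ) (h' : σ → RTree (Sum δ ℕ)) : Prop :=
  ∀ (a : σ) (i : ℕ), i < rk a ↔ HasVar (h' a) i

def Nonerasing {σ δ : Type} (h' : σ → RTree (Sum δ ℕ)) : Prop :=
  ∀ (a : σ) (i : ℕ) (l : List (RTree (Sum δ ℕ))), h' a ≠ .node (.inr i) l

def TetrisFree {σ δ : Type} [Inhabited δ] (rk : σ → ℕ) (h' : σ → RTree (Sum δ ℕ)) : Prop :=
  Nondeleting rk h' ∧ Nonerasing h' ∧
  ∀ s s' : RTree σ, RTree.WellRanked rk s → RTree.WellRanked rk s' →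
    applyHom h' s = applyHom h' s' →
    (∀ p, RTree.IsPos s p ↔ RTree.IsPos s' p) ∧
    (∀ p a l a' l', RTree.SubtreeAt s p (.node a l) → RTree.SubtreeAt s' p (.node a' l') →
      h' a = h' a')

inductive Sig3 : Type | alpha | beta | psi
inductive Del3 : Type | a | f

instance : Inhabited Del3 := ⟨Del3.a⟩

def rkSig3 : Sig3 → ℕ
  | .alpha => 0 | .beta => 0 | .psi => 2

/-- h(α) = h(β) = a, h(ψ) = f(x₂, x₁, x₁) (variables 0-indexed: x₁ = var 0, x₂ = var 1). -/
def hmap3 : Sig3 → RTree (Sum Del3 ℕ)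
  | .alpha => .node (.inl .a) []
  | .beta => .node (.inl .a) []
  | .psi => .node (.inl .f) [.node (.inr 1) [], .node (.inr 0) [], .node (.inr 0) []]


namespace Stmt3Aux

open RTree

lemma H_alpha : applyHom hmap3 (.node .alpha []) = .node Del3.a [] := by
  rw [applyHom, hmap3, substVars]; simp

lemma H_beta : applyHom hmap3 (.node .beta []) = .node Del3.a [] := by
  rw [applyHom, hmap3, substVars]; simp

lemma H_psi (t1 t2 : RTree Sig3) :
    applyHom hmap3 (.node .psi [t1, t2]) =
      .node Del3.f [applyHom hmap3 t2, applyHom hmap3 t1, applyHom hmap3 t1] := by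
  rw [applyHom, hmap3, substVars]; simp [substVars]

lemma subtree_inv {α : Type} {a : α} {ts : List (RTree α)} {p : List ℕ} {u : RTree α}
    (h : SubtreeAt (.node a ts) p u) :
    (p = [] ∧ u = .node a ts) ∨
      ∃ i q, p = i :: q ∧ ∃ hi : i < ts.length, SubtreeAt ts[i] q u := by
  cases h with
  | nil => exact Or.inl ⟨rfl, rfl⟩
  | cons hi h => exact Or.inr ⟨_, _, rfl, hi, h⟩

lemma isPos_inv {α : Type} {a : α} {ts : List (RTree α)} {p : List ℕ}
    (h : IsPos (.node a ts) p) :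
    p = [] ∨ ∃ i q, p = i :: q ∧ ∃ hi : i < ts.length, IsPos ts[i] q := by
  cases h with
  | nil => exact Or.inl rfl
  | cons hi h => exact Or.inr ⟨_, _, rfl, hi, h⟩

lemma isPos_leaf {α : Type} {x : α} {p : List ℕ} : IsPos (RTree.node x []) p ↔ p = [] := by
  constructor
  · intro h
    rcases isPos_inv h with h | ⟨i, q, _, hi, _⟩
    · exact h
    · simp at hi
  · rintro rfl; exact IsPos.nil _

lemma isPos_two {α : Type} {x : α} {t1 t2 : RTree α} {p : List ℕ} :
    IsPos (RTree.node x [t1, t2]) p ↔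
      p = [] ∨ (∃ q, p = 0 :: q ∧ IsPos t1 q) ∨ (∃ q, p = 1 :: q ∧ IsPos t2 q) := by
  constructor
  · intro h
    rcases isPos_inv h with h | ⟨i, q, rfl, hi, hq⟩
    · exact Or.inl h
    · simp at hi
      interval_cases i
      · exact Or.inr (Or.inl ⟨q, rfl, hq⟩)
      · exact Or.inr (Or.inr ⟨q, rfl, hq⟩)
  · rintro (rfl | ⟨q, rfl, hq⟩ | ⟨q, rfl, hq⟩)
    · exact IsPos.nil _
    · exact IsPos.cons (by simp) (by simpa using hq)
    · exact IsPos.cons (by simp) (by simpa using hq)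

lemma subtree_leaf {α : Type} {x : α} {p : List ℕ} {u : RTree α}
    (h : SubtreeAt (RTree.node x []) p u) : p = [] ∧ u = RTree.node x [] := by
  rcases subtree_inv h with h | ⟨i, q, _, hi, _⟩
  · exact h
  · simp at hi

lemma subtree_two {α : Type} {x : α} {t1 t2 : RTree α} {p : List ℕ} {u : RTree α}
    (h : SubtreeAt (RTree.node x [t1, t2]) p u) :
    (p = [] ∧ u = RTree.node x [t1, t2]) ∨
      (∃ q, p = 0 :: q ∧ SubtreeAt t1 q u) ∨ (∃ q, p = 1 :: q ∧ SubtreeAt t2 q u) := by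
  rcases subtree_inv h with h | ⟨i, q, rfl, hi, hq⟩
  · exact Or.inl h
  · simp at hi
    interval_cases i
    · exact Or.inr (Or.inl ⟨q, rfl, by simpa using hq⟩)
    · exact Or.inr (Or.inr ⟨q, rfl, by simpa using hq⟩)

lemma shape {s : RTree Sig3} (hs : WellRanked rkSig3 s) :
    (s = .node .alpha [] ∨ s = .node .beta []) ∨
      ∃ t1 t2, s = .node .psi [t1, t2] ∧ WellRanked rkSig3 t1 ∧ WellRanked rkSig3 t2 := by
  cases hs with
  | @node a ts hlen hts =>
    cases a with
    | alpha => left; left; rw [List.length_eq_zero_iff.mp hlen]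
    | beta => left; right; rw [List.length_eq_zero_iff.mp hlen]
    | psi =>
      obtain ⟨t1, t2, rfl⟩ := List.length_eq_two.mp hlen
      exact Or.inr ⟨t1, t2, rfl, hts t1 (by simp), hts t2 (by simp)⟩

lemma leafleaf (x x' : Sig3) (hx : hmap3 x = hmap3 x') :
    (∀ p, IsPos (RTree.node x ([] : List (RTree Sig3))) p ↔ IsPos (RTree.node x' []) p) ∧
    (∀ p a l a' l', SubtreeAt (RTree.node x ([] : List (RTree Sig3))) p (.node a l) →
      SubtreeAt (RTree.node x' ([] : List (RTree Sig3))) p (.node a' l') →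
      hmap3 a = hmap3 a') := by
  refine ⟨fun p => by rw [isPos_leaf, isPos_leaf], fun p a l a' l' h h' => ?_⟩
  obtain ⟨-, h⟩ := subtree_leaf h
  obtain ⟨-, h'⟩ := subtree_leaf h'
  injection h with e _; injection h' with e' _
  subst e; subst e'; exact hx

lemma main {s : RTree Sig3} (hs : WellRanked rkSig3 s) :
    ∀ s', WellRanked rkSig3 s' → applyHom hmap3 s = applyHom hmap3 s' →
    (∀ p, IsPos s p ↔ IsPos s' p) ∧
    (∀ p a l a' l', SubtreeAt s p (.node a l) → SubtreeAt s' p (.node a' l') →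
      hmap3 a = hmap3 a') := by
  induction hs with
  | @node x ts hlen hts ih =>
    intro s' hs' heq
    rcases shape hs' with (rfl | rfl) | ⟨u1, u2, rfl, hu1, hu2⟩ <;>
      rcases shape (WellRanked.node hlen hts) with (hss | hss) | ⟨t1, t2, hss, ht1, ht2⟩ <;>
      (injection hss with e1 e2; subst e1; subst e2)
    all_goals first
    | exact leafleaf _ _ rfl
    | (rw [H_psi] at heq
       first
       | (rw [H_alpha] at heq; simp at heq)
       | (rw [H_beta] at heq; simp at heq))
    | skip
    -- remaining: psi / psi
    rw [H_psi, H_psi] at heq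
    injection heq with _ h2
    injection h2 with e2 h2; injection h2 with e1 _
    have hm1 := ih t1 (by simp) u1 hu1 e1
    have hm2 := ih t2 (by simp) u2 hu2 e2
    constructor
    · intro p
      rw [isPos_two, isPos_two]
      constructor <;> rintro (rfl | ⟨q, rfl, hq⟩ | ⟨q, rfl, hq⟩)
      · exact Or.inl rfl
      · exact Or.inr (Or.inl ⟨q, rfl, (hm1.1 q).mp hq⟩)
      · exact Or.inr (Or.inr ⟨q, rfl, (hm2.1 q).mp hq⟩)
      · exact Or.inl rfl
      · exact Or.inr (Or.inl ⟨q, rfl, (hm1.1 q).mpr hq⟩)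
      · exact Or.inr (Or.inr ⟨q, rfl, (hm2.1 q).mpr hq⟩)
    · intro p a l a' l' h h'
      rcases subtree_two h with ⟨rfl, hu⟩ | ⟨q, rfl, hq⟩ | ⟨q, rfl, hq⟩
      · obtain ⟨-, hu'⟩ := (subtree_two h').resolve_right
          (by rintro (⟨q, hq, -⟩ | ⟨q, hq, -⟩) <;> simp at hq)
        injection hu with e _; injection hu' with e' _
        subst e; subst e'; rfl
      · rcases subtree_two h' with ⟨he, -⟩ | ⟨q', he, hq'⟩ | ⟨q', he, -⟩
        · simp at he
        · injection he with _ he; subst he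
          exact hm1.2 q a l a' l' hq hq'
        · simp at he
      · rcases subtree_two h' with ⟨he, -⟩ | ⟨q', he, -⟩ | ⟨q', he, hq'⟩
        · simp at he
        · simp at he
        · injection he with _ he; subst he
          exact hm2.2 q a l a' l' hq hq'

end Stmt3Aux

/-- this h is not injective, but it is tetris-free. -/
theorem stmt3 :
    (∃ s s' : RTree Sig3, RTree.WellRanked rkSig3 s ∧ RTree.WellRanked rkSig3 s' ∧
      applyHom hmap3 s = applyHom hmap3 s' ∧ s ≠ s') ∧
    TetrisFree rkSig3 hmap3 := by
  open Stmt3Aux RTree in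
  constructor
  · refine ⟨.node .alpha [], .node .beta [], WellRanked.node rfl (by simp),
      WellRanked.node rfl (by simp), by rw [H_alpha, H_beta], by simp⟩
  · refine ⟨?_, ?_, fun s s' hs hs' heq => Stmt3Aux.main hs s' hs' heq⟩
    · intro a i
      cases a with
      | alpha | beta =>
        simp only [rkSig3, hmap3]
        constructor
        · omega
        · rintro ⟨p, l, h⟩
          obtain ⟨-, h⟩ := subtree_leaf h
          simp at h
      | psi =>
        simp only [rkSig3, hmap3]
        constructor
        · intro hi
          interval_cases i
          · exact ⟨[1], [], SubtreeAt.cons (by simp) (by exact SubtreeAt.nil _)⟩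
          · exact ⟨[0], [], SubtreeAt.cons (by simp) (by exact SubtreeAt.nil _)⟩
        · rintro ⟨p, l, h⟩
          rcases subtree_inv h with ⟨-, h⟩ | ⟨j, q, rfl, hj, hq⟩
          · simp at h
          · simp at hj
            interval_cases j <;> simp_all <;>
              · obtain ⟨-, h⟩ := subtree_leaf hq
                injection h with h _
                injection h with h
                omega
    · intro a i l
      cases a <;> simp [hmap3]
end

section
/- Let C be a tree with parallel hole positions w₁,…,w_r and (t_i)_{i∈ℕ} pairwise distinct trees. Write C_{kh} for C with t_k at hole w₁ and t_h at holes w₂,…,w_r. Suppose u, v are parallel positions with C_{kh}|_u = C_{kh}|_v for all k < h, u is a prefix of w₁ or extends w₁, and v is parallel to w₁. Then u cannot be a (weak) prefix of w₁; i.e. w₁ ≤ u. -/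
inductive Fills {δ : Type} : RTree (Sum δ Unit) → (List ℕ → RTree δ) → RTree δ → Prop
  | hole {l : List (RTree (Sum δ Unit))} (f : List ℕ → RTree δ) :
      Fills (.node (.inr ()) l) f (f [])
  | node {d : δ} {ts : List (RTree (Sum δ Unit))} {f : List ℕ → RTree δ} {us : List (RTree δ)}
      (h : ts.length = us.length)
      (hc : ∀ (i : ℕ) (hi : i < ts.length), Fills ts[i] (fun p => f (i :: p)) (us[i]'(h ▸ hi))) :
      Fills (.node (.inl d) ts) f (.node d us)

def Par (p q : List ℕ) : Prop := ¬ p <+: q ∧ ¬ q <+: p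

def HoleAt {δ : Type} (C : RTree (Sum δ Unit)) (p : List ℕ) : Prop :=
  ∃ l, RTree.SubtreeAt C p (RTree.node (Sum.inr ()) l)

/-! Filling hole `w₁` with `t k` puts `t k` below position `u` whenever `u ≤ w₁`, while the subtree at
a position `v` parallel to `w₁` only sees the other holes, whose content does not depend on `k`.
So for `k = 0, 1` (and `h = 2`) the subtrees at `u` are distinct, yet both equal the subtree at `v`,
which is the same in both fillings. -/

namespace RTree

variable {α : Type}

theorem SubtreeAt.unique {t y y' : RTree α} {p : List ℕ} (h : SubtreeAt t p y)
    (h' : SubtreeAt t p y') : y = y' := by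
  induction h with
  | nil => cases h'; rfl
  | cons _ _ ih => cases h' with | cons _ hs' => exact ih hs'

theorem SubtreeAt.of_append {t y z : RTree α} {p q : List ℕ} (h : SubtreeAt t p y)
    (h' : SubtreeAt t (p ++ q) z) : SubtreeAt y q z := by
  induction h with
  | nil => exact h'
  | cons _ _ ih => cases h' with | cons _ hs' => exact ih hs'

end RTree

section Filling

variable {δ : Type}

theorem Par.symm {p q : List ℕ} (h : Par p q) : Par q p := ⟨h.2, h.1⟩

instance : Std.Symm Par := ⟨fun _ _ => Par.symm⟩

theorem HoleAt.nil (l : List (RTree (Sum δ Unit))) : HoleAt (.node (.inr ()) l) [] :=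
  ⟨l, .nil _⟩

theorem HoleAt.cons {a : Sum δ Unit} {ts : List (RTree (Sum δ Unit))} {i : ℕ}
    (hi : i < ts.length) {q : List ℕ} (h : HoleAt ts[i] q) : HoleAt (.node a ts) (i :: q) :=
  let ⟨l, hl⟩ := h
  ⟨l, .cons hi hl⟩

theorem exists_fills : ∀ (C : RTree (Sum δ Unit)) (f : List ℕ → RTree δ), ∃ X, Fills C f X
  | .node (.inr ()) _, f => ⟨f [], .hole f⟩
  | .node (.inl d) ts, f => by
    choose us hus using fun i : Fin ts.length => exists_fills ts[i.1] (fun p => f (i :: p))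
    exact ⟨.node d (List.ofFn us), .node (by simp) fun i hi => by simpa using hus ⟨i, hi⟩⟩
decreasing_by
  all_goals
    simp only [RTree.node.sizeOf_spec]
    have := List.sizeOf_lt_of_mem (List.getElem_mem i.2)
    omega

namespace Fills

theorem eq_of_eqOn_holes {C : RTree (Sum δ Unit)} {f f' : List ℕ → RTree δ} {X X' : RTree δ}
    (h : Fills C f X) (h' : Fills C f' X') (hf : ∀ q, HoleAt C q → f q = f' q) : X = X' := by
  induction h generalizing f' X' with
  | hole f =>
    cases h' with | hole => exact hf [] (.nil _)
  | node hlen _ ih =>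
    cases h' with
    | node hlen' hc' =>
      congr 1
      refine List.ext_getElem (by omega) fun i hi _ => ?_
      exact ih i (by omega) (hc' i (by omega)) fun q hq => hf (i :: q) (.cons (by omega) hq)

/-- A hole node of `C` keeps its children, so without `hmin` the hole at `p` could sit below
another hole, which hides it in the filling. -/
theorem subtreeAt_of_holeAt {C : RTree (Sum δ Unit)} {f : List ℕ → RTree δ} {X : RTree δ}
    (h : Fills C f X) {p : List ℕ} (hp : HoleAt C p)
    (hmin : ∀ q, HoleAt C q → q <+: p → q = p) : RTree.SubtreeAt X p (f p) := by
  induction h generalizing p with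
  | @hole l f =>
    obtain rfl : [] = p := hmin [] (.nil l) List.nil_prefix
    exact .nil _
  | @node _ ts _ _ hlen _ ih =>
    obtain ⟨l, hl⟩ := hp
    cases hl with
    | @cons _ _ i p _ hi hs =>
      refine .cons (by omega) (ih i hi ⟨l, hs⟩ fun q hq hqp => ?_)
      simpa using hmin (i :: q) (.cons hi hq) (List.cons_prefix_cons.2 ⟨rfl, hqp⟩)

theorem subtreeAt_eq_of_eqOn_comparable_holes {C : RTree (Sum δ Unit)}
    {f f' : List ℕ → RTree δ} {X X' Y Y' : RTree δ} (h : Fills C f X) (h' : Fills C f' X')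
    {v : List ℕ} (hf : ∀ q, HoleAt C q → (q <+: v ∨ v <+: q) → f q = f' q)
    (hY : RTree.SubtreeAt X v Y) (hY' : RTree.SubtreeAt X' v Y') : Y = Y' := by
  induction v generalizing C f f' X X' with
  | nil =>
    cases hY; cases hY'
    exact h.eq_of_eqOn_holes h' fun q hq => hf q hq (.inr List.nil_prefix)
  | cons i v ih =>
    cases h with
    | hole =>
      cases h' with
      | hole =>
        rw [hf [] (.nil _) (.inl List.nil_prefix)] at hY
        exact hY.unique hY'
    | node _ hc =>
      cases h' with
      | node _ hc' =>
        cases hY with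
        | cons _ hs =>
          cases hY' with
          | cons _ hs' =>
            refine ih (hc i (by omega)) (hc' i (by omega)) (fun q hq hqv => ?_) hs hs'
            exact hf (i :: q) (.cons (by omega) hq) (by simpa [List.cons_prefix_cons] using hqv)

end Fills

end Filling

theorem stmt13_general {δ : Type} (C : RTree (Sum δ Unit))
    (w : List (List ℕ)) (hw : w ≠ [])
    (hholes : ∀ p, HoleAt C p ↔ p ∈ w) (hpar : w.Pairwise Par)
    (t : ℕ → RTree δ) (ht : Function.Injective t)
    (u v : List ℕ)
    (hu : u <+: w.head hw ∨ w.head hw <+: u) (hv : Par v (w.head hw))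
    (heq : ∀ k h : ℕ, k < h →
      ∀ X, Fills C (fun p => if p = w.head hw then t k else t h) X →
        ∃ s, RTree.SubtreeAt X u s ∧ RTree.SubtreeAt X v s) :
    w.head hw <+: u := by
  set w₁ := w.head hw
  refine hu.resolve_left fun ⟨r, hr⟩ => ?_
  have hw₁ : HoleAt C w₁ := (hholes w₁).2 (List.head_mem hw)
  have hmin : ∀ q, HoleAt C q → q <+: w₁ → q = w₁ := fun q hq hqw => by
    by_contra hne
    exact (hpar.forall ((hholes q).1 hq) ((hholes w₁).1 hw₁) hne).1 hqw
  have hsame : ∀ q, HoleAt C q → (q <+: v ∨ v <+: q) →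
      (if q = w₁ then t 0 else t 2) = (if q = w₁ then t 1 else t 2) := by
    rintro q - hqv
    have hne : q ≠ w₁ := by rintro rfl; exact hqv.elim hv.2 hv.1
    simp [hne]
  obtain ⟨X₀, hX₀⟩ := exists_fills C fun p => if p = w₁ then t 0 else t 2
  obtain ⟨X₁, hX₁⟩ := exists_fills C fun p => if p = w₁ then t 1 else t 2
  obtain ⟨s₀, hu₀, hv₀⟩ := heq 0 2 (by norm_num) X₀ hX₀
  obtain ⟨s₁, hu₁, hv₁⟩ := heq 1 2 (by norm_num) X₁ hX₁
  have ht₀ : RTree.SubtreeAt s₀ r (t 0) :=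
    hu₀.of_append (hr ▸ by simpa using hX₀.subtreeAt_of_holeAt hw₁ hmin)
  have ht₁ : RTree.SubtreeAt s₁ r (t 1) :=
    hu₁.of_append (hr ▸ by simpa using hX₁.subtreeAt_of_holeAt hw₁ hmin)
  rw [hX₀.subtreeAt_eq_of_eqOn_comparable_holes hX₁ hsame hv₀ hv₁] at ht₀
  exact absurd (ht (ht₀.unique ht₁)) (by norm_num)

/-- if u is in prefix-relation with the hole w₁, v is parallel to w₁, and
C_{kh}|_u = C_{kh}|_v for all k < h, then u cannot be a prefix of w₁, i.e. w₁ ≤ u. -/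
theorem stmt13 {δ : Type} (C : RTree (Sum δ Unit))
    (w : List (List ℕ)) (hw : w ≠ [])
    (hholes : ∀ p, HoleAt C p ↔ p ∈ w) (hpar : w.Pairwise Par)
    (t : ℕ → RTree δ) (ht : Function.Injective t)
    (u v : List ℕ) (huv : Par u v)
    (hu : u <+: w.head hw ∨ w.head hw <+: u) (hv : Par v (w.head hw))
    (heq : ∀ k h : ℕ, k < h →
      ∀ X, Fills C (fun p => if p = w.head hw then t k else t h) X →
        ∃ s, RTree.SubtreeAt X u s ∧ RTree.SubtreeAt X v s) :
    w.head hw <+: u :=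
  stmt13_general C w hw hholes hpar t ht u v hu hv heq
end
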